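/- (Uniform gradient norm bound, Lemma 1 eq. (14), deterministic errors.) Under the setup of the cumulative distance bound — A : ℝⁿ → ℝᵐ nonzero linear with χ = σ_min/σ_max; f_k convex differentiable with L-Lipschitz gradient, minimizer sets X_k* = {x : A x = u_k*}, ∇f_k vanishing on X_k*, quadratic growth constant μ > 0; step size α > 0 with αL(1+ν)² < 1, ℓ² := 1 − μα(1 − αL(1+ν)²) + 2ναL with 0 < ℓ < χ, ζ := α(1+αL)/ℓ; errors ‖e_k‖ ≤ ε_k + ν‖∇f_k(x_k)‖ with ε_k ≤ ε for all k; iterates x_{k+1} = x_k − α(∇f_k(x_k) + e_k) — assume additionally that there exist x_k* ∈ X_k* with ‖x_{k+1}* − x_k*‖ ≤ σ_v for all k. Then for every k ≥ 1, ‖∇f_k(x_k)‖ ≤ L·dist(x_1, X_1*) + L(σ_v + ζε)/(χ − ℓ). -/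

import Mathlib

/-!
Write `d_k = dist(x_k, X_k*)`. Convexity, quadratic growth and the bound
`‖∇f(x)‖² ≤ 2L (f(x) - f*)` make one inexact gradient step contract the distance to the
*current* solution set: `dist(x_{k+1}, X_k*) ≤ ℓ d_k + α ε_k`. As the `X_k*` are solution sets
of `A x = u`, the extreme singular values of `A` compare distances to consecutive solution
sets: `χ d_{k+1} ≤ dist(x_{k+1}, X_k*) + ‖x_{k+1}* - x_k*‖`. So `χ d_{k+1} ≤ ℓ d_k + σ_v + ζ ε`,
and since `ℓ < χ` this keeps `d_k ≤ d_1 + (σ_v + ζ ε)/(χ - ℓ)`; finally `‖∇f_k(x_k)‖ ≤ L d_k`.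
-/

open scoped RealInnerProductSpace
open Set Metric

section SmoothConvex

variable {E : Type*} [NormedAddCommGroup E] [InnerProductSpace ℝ E] [CompleteSpace E]
  {f : E → ℝ} {L : ℝ}

lemma hasDerivAt_apply_add_smul (hd : Differentiable ℝ f) (x d : E) (t : ℝ) :
    HasDerivAt (fun t : ℝ => f (x + t • d)) ⟪gradient f (x + t • d), d⟫ t := by
  have hline : HasDerivAt (fun t : ℝ => x + t • d) d t := by
    simpa using ((hasDerivAt_id t).smul_const d).const_add x
  exact (hd (x + t • d)).hasGradientAt.hasFDerivAt.comp_hasDerivAt t hline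

lemma ConvexOn.add_inner_gradient_le (hf : ConvexOn ℝ univ f) (hd : Differentiable ℝ f)
    (x y : E) : f x + ⟪gradient f x, y - x⟫ ≤ f y := by
  have hφ : ConvexOn ℝ univ (fun t : ℝ => f (x + t • (y - x))) := by
    simpa [Function.comp_def, AffineMap.lineMap_apply_module', add_comm] using
      hf.comp_affineMap (AffineMap.lineMap x y)
  have := hφ.le_slope_of_hasDerivAt (mem_univ 0) (mem_univ 1) one_pos
    (by simpa only [zero_smul, add_zero] using hasDerivAt_apply_add_smul hd x (y - x) 0)
  simp only [slope_def_field, zero_smul, add_zero, one_smul, add_sub_cancel, sub_zero,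
    div_one] at this
  linarith

lemma le_add_inner_gradient_add_sq (hd : Differentiable ℝ f)
    (hLip : ∀ u v : E, ‖gradient f u - gradient f v‖ ≤ L * ‖u - v‖) (x y : E) :
    f y ≤ f x + ⟪gradient f x, y - x⟫ + L / 2 * ‖y - x‖ ^ 2 := by
  set d := y - x
  set φ : ℝ → ℝ := fun t => f (x + t • d) - t * ⟪gradient f x, d⟫ - L / 2 * t ^ 2 * ‖d‖ ^ 2
  have hφ' : ∀ t, HasDerivAt φ
      (⟪gradient f (x + t • d) - gradient f x, d⟫ - L * t * ‖d‖ ^ 2) t := fun t => by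
    refine (((hasDerivAt_apply_add_smul hd x d t).sub
      ((hasDerivAt_id t).mul_const ⟪gradient f x, d⟫)).sub
      (((hasDerivAt_pow 2 t).const_mul (L / 2)).mul_const (‖d‖ ^ 2))).congr_deriv ?_
    rw [inner_sub_left]
    simp only [Nat.cast_ofNat]
    ring
  -- the Lipschitz bound makes the derivative of `φ` nonpositive for `t ≥ 0`
  have hanti : AntitoneOn φ (Icc 0 1) := by
    refine antitoneOn_of_hasDerivWithinAt_nonpos (convex_Icc 0 1)
      (fun t _ => (hφ' t).continuousAt.continuousWithinAt) (fun t _ => (hφ' t).hasDerivWithinAt)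
      fun t ht => ?_
    rw [interior_Icc] at ht
    have hlip : ‖gradient f (x + t • d) - gradient f x‖ ≤ L * (t * ‖d‖) := by
      simpa [norm_smul, abs_of_pos ht.1] using hLip (x + t • d) x
    nlinarith [real_inner_le_norm (gradient f (x + t • d) - gradient f x) d, norm_nonneg d]
  have := hanti (left_mem_Icc.2 zero_le_one) (right_mem_Icc.2 zero_le_one) zero_le_one
  simp only [φ, zero_smul, add_zero, one_smul, zero_mul, one_mul, sub_zero, one_pow, ne_eq,
    OfNat.ofNat_ne_zero, not_false_eq_true, zero_pow, mul_zero, d, add_sub_cancel] at this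
  linarith

lemma sq_norm_gradient_le (hd : Differentiable ℝ f) (hL : 0 < L)
    (hLip : ∀ u v : E, ‖gradient f u - gradient f v‖ ≤ L * ‖u - v‖) {p : E}
    (hp : ∀ y, f p ≤ f y) (x : E) :
    ‖gradient f x‖ ^ 2 ≤ 2 * L * (f x - f p) := by
  have h := le_add_inner_gradient_add_sq hd hLip x (x - L⁻¹ • gradient f x)
  rw [sub_sub_cancel_left, inner_neg_right, real_inner_smul_right, real_inner_self_eq_norm_sq,
    norm_neg, norm_smul, Real.norm_of_nonneg (inv_nonneg.2 hL.le)] at h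
  have hstep : L / 2 * (L⁻¹ * ‖gradient f x‖) ^ 2 = L⁻¹ * ‖gradient f x‖ ^ 2 / 2 := by
    field_simp
  calc ‖gradient f x‖ ^ 2 = 2 * L * (L⁻¹ * ‖gradient f x‖ ^ 2 / 2) := by field_simp
    _ ≤ 2 * L * (f x - f p) := by
      gcongr
      linarith [hp (x - L⁻¹ • gradient f x)]

lemma gradient_eq_zero_of_forall_le {p : E} (hp : ∀ y, f p ≤ f y) : gradient f p = 0 := by
  simp [gradient, IsLocalMin.fderiv_eq_zero (Filter.Eventually.of_forall hp)]

lemma norm_gradient_le_mul_norm_sub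
    (hLip : ∀ u v : E, ‖gradient f u - gradient f v‖ ≤ L * ‖u - v‖) {p : E}
    (hp : ∀ y, f p ≤ f y) (x : E) : ‖gradient f x‖ ≤ L * ‖x - p‖ := by
  simpa [gradient_eq_zero_of_forall_le hp] using hLip x p

lemma norm_gradient_le_mul_infDist (hL : 0 < L)
    (hLip : ∀ u v : E, ‖gradient f u - gradient f v‖ ≤ L * ‖u - v‖) {S : Set E}
    (hne : S.Nonempty) (hS : ∀ p ∈ S, ∀ y, f p ≤ f y) (x : E) :
    ‖gradient f x‖ ≤ L * infDist x S := by
  rw [← div_le_iff₀' hL, le_infDist hne]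
  intro p hp
  rw [div_le_iff₀' hL, dist_eq_norm]
  exact norm_gradient_le_mul_norm_sub hLip (hS p hp) x

end SmoothConvex

section GradientStep

variable {E : Type*} [NormedAddCommGroup E] [InnerProductSpace ℝ E] [CompleteSpace E]
  {f : E → ℝ} {L μ α ν ℓ ε : ℝ} {x p e : E}

lemma sq_norm_sub_smul_gradient_sub (x p : E) (α : ℝ) :
    ‖x - α • gradient f x - p‖ ^ 2 =
      ‖x - p‖ ^ 2 - 2 * α * ⟪gradient f x, x - p⟫ + α ^ 2 * ‖gradient f x‖ ^ 2 := by
  rw [sub_right_comm, norm_sub_sq_real, real_inner_smul_right, real_inner_comm, norm_smul,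
    Real.norm_eq_abs, mul_pow, sq_abs]
  ring

lemma ConvexOn.sub_le_inner_gradient (hf : ConvexOn ℝ univ f) (hd : Differentiable ℝ f) (x p : E) :
    f x - f p ≤ ⟪gradient f x, x - p⟫ := by
  have h := hf.add_inner_gradient_le hd x p
  rw [← neg_sub x p, inner_neg_right] at h
  linarith

lemma norm_sub_smul_gradient_sub_le (hf : ConvexOn ℝ univ f) (hd : Differentiable ℝ f)
    (hL : 0 < L) (hLip : ∀ u v : E, ‖gradient f u - gradient f v‖ ≤ L * ‖u - v‖)
    (hp : ∀ y, f p ≤ f y) (hα : 0 ≤ α) (hαL : α * L ≤ 1) (x : E) :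
    ‖x - α • gradient f x - p‖ ≤ ‖x - p‖ := by
  have hgap := sq_norm_gradient_le hd hL hLip hp x
  have hinner := hf.sub_le_inner_gradient hd x p
  have hsq : ‖x - α • gradient f x - p‖ ^ 2 ≤ ‖x - p‖ ^ 2 := by
    rw [sq_norm_sub_smul_gradient_sub]
    nlinarith [mul_le_mul_of_nonneg_left hinner (by positivity : 0 ≤ 2 * α),
      mul_le_mul_of_nonneg_left hgap (sq_nonneg α),
      mul_le_mul_of_nonneg_right hαL (by nlinarith [hp x] : 0 ≤ 2 * α * (f x - f p))]
  exact le_of_pow_le_pow_left₀ two_ne_zero (norm_nonneg _) hsq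

lemma sq_norm_sub_smul_gradient_sub_le (hf : ConvexOn ℝ univ f) (hd : Differentiable ℝ f)
    (hL : 0 < L) (hLip : ∀ u v : E, ‖gradient f u - gradient f v‖ ≤ L * ‖u - v‖)
    (hp : ∀ y, f p ≤ f y) (hQG : μ / 2 * ‖x - p‖ ^ 2 ≤ f x - f p) (hα : 0 ≤ α)
    (hstep : α * L * (1 + ν) ^ 2 ≤ 1) :
    ‖x - α • gradient f x - p‖ ^ 2 ≤ (1 - μ * α * (1 - α * L * (1 + ν) ^ 2)) * ‖x - p‖ ^ 2
      - α ^ 2 * ((1 + ν) ^ 2 - 1) * ‖gradient f x‖ ^ 2 := by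
  have hgap := sq_norm_gradient_le hd hL hLip hp x
  have hinner := hf.sub_le_inner_gradient hd x p
  rw [sq_norm_sub_smul_gradient_sub]
  -- split `f x - f p` with weights `θ = 1 - αL(1+ν)²` and `1 - θ`: the first part is bounded
  -- below by quadratic growth, the second by the squared gradient norm
  nlinarith [mul_le_mul_of_nonneg_left hinner (by positivity : 0 ≤ 2 * α),
    mul_le_mul_of_nonneg_left hQG
      (mul_nonneg (by positivity : 0 ≤ 2 * α) (sub_nonneg.2 hstep)),
    mul_le_mul_of_nonneg_left hgap (by positivity : 0 ≤ α ^ 2 * (1 + ν) ^ 2)]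

lemma norm_sub_smul_gradient_sub_add_le (hf : ConvexOn ℝ univ f) (hd : Differentiable ℝ f)
    (hL : 0 < L) (hLip : ∀ u v : E, ‖gradient f u - gradient f v‖ ≤ L * ‖u - v‖)
    (hp : ∀ y, f p ≤ f y) (hQG : μ / 2 * ‖x - p‖ ^ 2 ≤ f x - f p) (hν : 0 ≤ ν) (hα : 0 ≤ α)
    (hstep : α * L * (1 + ν) ^ 2 ≤ 1) (hℓ : 0 ≤ ℓ)
    (hℓsq : ℓ ^ 2 = 1 - μ * α * (1 - α * L * (1 + ν) ^ 2) + 2 * ν * α * L) :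
    ‖x - α • gradient f x - p‖ + α * ν * ‖gradient f x‖ ≤ ℓ * ‖x - p‖ := by
  have hαL : α * L ≤ 1 := by nlinarith [mul_nonneg hα hL.le, mul_nonneg hν (mul_nonneg hα hL.le)]
  have hs := norm_sub_smul_gradient_sub_le hf hd hL hLip hp hα hαL x
  have hs2 := sq_norm_sub_smul_gradient_sub_le hf hd hL hLip hp hQG hα hstep
  have hG := norm_gradient_le_mul_norm_sub hLip hp x
  have hGs := mul_le_mul hG hs (norm_nonneg _) (by positivity)
  refine le_of_pow_le_pow_left₀ two_ne_zero (by positivity) ?_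
  -- with `s`, `G` the two norms on the left: `(s + ανG)² ≤ ℓ²‖x - p‖² - 2α²νG²`
  nlinarith [mul_le_mul_of_nonneg_left hGs (mul_nonneg hα hν),
    mul_nonneg (mul_nonneg (sq_nonneg α) hν) (sq_nonneg ‖gradient f x‖)]

lemma norm_sub_smul_gradient_add_sub_le (hf : ConvexOn ℝ univ f) (hd : Differentiable ℝ f)
    (hL : 0 < L) (hLip : ∀ u v : E, ‖gradient f u - gradient f v‖ ≤ L * ‖u - v‖)
    (hp : ∀ y, f p ≤ f y) (hQG : μ / 2 * ‖x - p‖ ^ 2 ≤ f x - f p) (hν : 0 ≤ ν) (hα : 0 ≤ α)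
    (hstep : α * L * (1 + ν) ^ 2 ≤ 1) (hℓ : 0 ≤ ℓ)
    (hℓsq : ℓ ^ 2 = 1 - μ * α * (1 - α * L * (1 + ν) ^ 2) + 2 * ν * α * L)
    (he : ‖e‖ ≤ ε + ν * ‖gradient f x‖) :
    ‖x - α • (gradient f x + e) - p‖ ≤ ℓ * ‖x - p‖ + α * ε := by
  have hexact := norm_sub_smul_gradient_sub_add_le hf hd hL hLip hp hQG hν hα hstep hℓ hℓsq
  calc ‖x - α • (gradient f x + e) - p‖ = ‖(x - α • gradient f x - p) - α • e‖ := by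
        rw [smul_add]; abel_nf
    _ ≤ ‖x - α • gradient f x - p‖ + α * ‖e‖ := by
        refine (norm_sub_le _ _).trans ?_
        rw [norm_smul, Real.norm_of_nonneg hα]
    _ ≤ ℓ * ‖x - p‖ + α * ε := by nlinarith [mul_le_mul_of_nonneg_left he hα]

lemma infDist_sub_smul_gradient_add_le [ProperSpace E] (hf : ConvexOn ℝ univ f)
    (hd : Differentiable ℝ f) (hL : 0 < L)
    (hLip : ∀ u v : E, ‖gradient f u - gradient f v‖ ≤ L * ‖u - v‖) {S : Set E}
    (hSc : IsClosed S) (hne : S.Nonempty) (hS : ∀ p ∈ S, ∀ y, f p ≤ f y)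
    (hQG : ∀ p ∈ S, μ / 2 * infDist x S ^ 2 ≤ f x - f p) (hν : 0 ≤ ν) (hα : 0 ≤ α)
    (hstep : α * L * (1 + ν) ^ 2 ≤ 1) (hℓ : 0 ≤ ℓ)
    (hℓsq : ℓ ^ 2 = 1 - μ * α * (1 - α * L * (1 + ν) ^ 2) + 2 * ν * α * L)
    (he : ‖e‖ ≤ ε + ν * ‖gradient f x‖) :
    infDist (x - α • (gradient f x + e)) S ≤ ℓ * infDist x S + α * ε := by
  obtain ⟨p, hp, hpd⟩ := hSc.exists_infDist_eq_dist hne x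
  rw [hpd, dist_eq_norm] at hQG ⊢
  exact (infDist_le_dist_of_mem hp).trans_eq (dist_eq_norm _ _) |>.trans
    (norm_sub_smul_gradient_add_sub_le hf hd hL hLip (hS p hp) (hQG p hp) hν hα hstep hℓ hℓsq he)

end GradientStep

section SingularValue

variable {E F : Type*} [NormedAddCommGroup E] [InnerProductSpace ℝ E]
  [NormedAddCommGroup F] [NormedSpace ℝ F] (A : E →L[ℝ] F)

noncomputable def minSingularValue : ℝ :=
  sInf {c : ℝ | ∃ x : E, x ≠ 0 ∧ x ∈ (LinearMap.ker (A : E →ₗ[ℝ] F))ᗮ ∧ c = ‖A x‖ / ‖x‖}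

lemma minSingularValue_nonneg : 0 ≤ minSingularValue A :=
  Real.sInf_nonneg fun _ ⟨_, _, _, hc⟩ => hc ▸ by positivity

lemma minSingularValue_mul_norm_le {w : E} (hw : w ∈ (LinearMap.ker (A : E →ₗ[ℝ] F))ᗮ) :
    minSingularValue A * ‖w‖ ≤ ‖A w‖ := by
  rcases eq_or_ne w 0 with rfl | hw0
  · simp
  have hpos : 0 < ‖w‖ := norm_pos_iff.2 hw0
  rw [← le_div_iff₀ hpos]
  exact csInf_le ⟨0, fun _ ⟨_, _, _, hc⟩ => hc ▸ by positivity⟩ ⟨w, hw0, hw, rfl⟩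

lemma minSingularValue_le_opNorm [CompleteSpace E] (hA : A ≠ 0) : minSingularValue A ≤ ‖A‖ := by
  have : CompleteSpace (LinearMap.ker (A : E →ₗ[ℝ] F)) := A.isClosed_ker.completeSpace_coe
  have hker : (LinearMap.ker (A : E →ₗ[ℝ] F))ᗮ ≠ ⊥ := by
    rw [Ne, Submodule.orthogonal_eq_bot_iff, LinearMap.ker_eq_top]
    exact fun h => hA (ContinuousLinearMap.coe_injective h)
  obtain ⟨w, hw, hw0⟩ := Submodule.exists_mem_ne_zero_of_ne_bot hker
  exact le_of_mul_le_mul_right ((minSingularValue_mul_norm_le A hw).trans (A.le_opNorm w))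
    (norm_pos_iff.2 hw0)

lemma minSingularValue_mul_infDist_le [CompleteSpace E] (z x₀ : E) :
    minSingularValue A * infDist z {x | A x = A x₀} ≤ ‖A z - A x₀‖ := by
  have : CompleteSpace (LinearMap.ker (A : E →ₗ[ℝ] F)) := A.isClosed_ker.completeSpace_coe
  set K := LinearMap.ker (A : E →ₗ[ℝ] F)
  -- `x₀ + P_K (z - x₀)` solves the equation and `z` differs from it by a vector of `Kᗮ`
  set v : E := K.starProjection (z - x₀)
  have hv : A v = 0 := K.starProjection_apply_mem (z - x₀)
  have hw : z - x₀ - v ∈ Kᗮ := K.sub_starProjection_mem_orthogonal (z - x₀)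
  have hdist : infDist z {x | A x = A x₀} ≤ ‖z - x₀ - v‖ := by
    have h := infDist_le_dist_of_mem (x := z) (show x₀ + v ∈ {x | A x = A x₀} by simp [hv])
    rwa [dist_eq_norm, ← sub_sub] at h
  calc minSingularValue A * infDist z {x | A x = A x₀}
      ≤ minSingularValue A * ‖z - x₀ - v‖ :=
        mul_le_mul_of_nonneg_left hdist (minSingularValue_nonneg A)
    _ ≤ ‖A (z - x₀ - v)‖ := minSingularValue_mul_norm_le A hw
    _ = ‖A z - A x₀‖ := by simp [hv]

lemma norm_sub_le_opNorm_mul_infDist (z x₀ : E) :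
    ‖A z - A x₀‖ ≤ ‖A‖ * infDist z {x | A x = A x₀} := by
  rcases (norm_nonneg A).eq_or_lt with hA | hA
  · simp [norm_eq_zero.1 hA.symm]
  rw [← div_le_iff₀' hA, le_infDist (show {x | A x = A x₀}.Nonempty from ⟨x₀, rfl⟩)]
  intro y hy
  rw [div_le_iff₀' hA, dist_eq_norm, ← show A y = A x₀ from hy, ← map_sub]
  exact A.le_opNorm _

lemma minSingularValue_div_opNorm_mul_infDist_le [CompleteSpace E] (hA : A ≠ 0) (z x₀ x₁ : E) :
    minSingularValue A / ‖A‖ * infDist z {x | A x = A x₁} ≤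
      infDist z {x | A x = A x₀} + ‖x₁ - x₀‖ := by
  rw [div_mul_eq_mul_div, div_le_iff₀' (norm_pos_iff.2 hA)]
  calc minSingularValue A * infDist z {x | A x = A x₁} ≤ ‖A z - A x₁‖ :=
        minSingularValue_mul_infDist_le A z x₁
    _ ≤ ‖A z - A x₀‖ + ‖A (x₁ - x₀)‖ := by
        rw [map_sub, norm_sub_rev (A x₁)]; exact norm_sub_le_norm_sub_add_norm_sub _ _ _
    _ ≤ ‖A‖ * infDist z {x | A x = A x₀} + ‖A‖ * ‖x₁ - x₀‖ :=
        add_le_add (norm_sub_le_opNorm_mul_infDist A z x₀) (A.le_opNorm _)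
    _ = _ := (mul_add _ _ _).symm

end SingularValue

lemma le_add_div_sub_of_mul_le {d : ℕ → ℝ} {ℓ χ c : ℝ} {k₀ : ℕ} (hℓ : 0 ≤ ℓ) (hℓχ : ℓ < χ)
    (hc : 0 ≤ c) (hd₀ : 0 ≤ d k₀) (h : ∀ k, k₀ ≤ k → χ * d (k + 1) ≤ ℓ * d k + c) :
    ∀ k, k₀ ≤ k → d k ≤ d k₀ + c / (χ - ℓ) := by
  have hχℓ : 0 < χ - ℓ := sub_pos.2 hℓχ
  have hcancel : (χ - ℓ) * (c / (χ - ℓ)) = c := mul_div_cancel₀ c hχℓ.ne'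
  intro k hk
  induction k, hk using Nat.le_induction with
  | base => exact le_add_of_nonneg_right (div_nonneg hc hχℓ.le)
  | succ k hk ih =>
    refine le_of_mul_le_mul_left ((h k hk).trans ?_) (hℓ.trans_lt hℓχ)
    nlinarith [mul_le_mul_of_nonneg_left ih hℓ, mul_nonneg hχℓ.le hd₀]

theorem uniform_gradient_norm_bound_inexact_ogd_general {n m : ℕ}
    (A : EuclideanSpace ℝ (Fin n) →L[ℝ] EuclideanSpace ℝ (Fin m)) (hA : A ≠ 0)
    (σmin σmax χ : ℝ)
    (hσmin : σmin = sInf {c : ℝ | ∃ x : EuclideanSpace ℝ (Fin n),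
      x ≠ 0 ∧ x ∈ (LinearMap.ker (A : EuclideanSpace ℝ (Fin n) →ₗ[ℝ] EuclideanSpace ℝ (Fin m)))ᗮ ∧ c = ‖A x‖ / ‖x‖})
    (hσmax : σmax = ‖A‖) (hχ : χ = σmin / σmax)
    (f : ℕ → EuclideanSpace ℝ (Fin n) → ℝ)
    (hconv : ∀ k, ConvexOn ℝ Set.univ (f k)) (hdiff : ∀ k, Differentiable ℝ (f k))
    (L : ℝ) (hL : 0 < L)
    (hLip : ∀ k, ∀ u v : EuclideanSpace ℝ (Fin n),
      ‖gradient (f k) u - gradient (f k) v‖ ≤ L * ‖u - v‖)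
    (ustar : ℕ → EuclideanSpace ℝ (Fin m))
    (Xstar : ℕ → Set (EuclideanSpace ℝ (Fin n)))
    (hXstar : ∀ k, Xstar k = {x | A x = ustar k})
    (hXmin : ∀ k, Xstar k = {x | ∀ y : EuclideanSpace ℝ (Fin n), f k x ≤ f k y})
    (fstar : ℕ → ℝ) (hfstar : ∀ k, ∀ x ∈ Xstar k, f k x = fstar k)
    (μ : ℝ)
    (hQG : ∀ k, ∀ x : EuclideanSpace ℝ (Fin n),
      μ / 2 * Metric.infDist x (Xstar k) ^ 2 ≤ f k x - fstar k)
    (ε : ℕ → ℝ) (hεnn : ∀ k, 0 ≤ ε k) (εbar : ℝ) (hεbar : ∀ k, ε k ≤ εbar)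
    (ν α : ℝ) (hν : 0 ≤ ν) (hα : 0 < α)
    (hstep : α * L * (1 + ν) ^ 2 < 1)
    (ℓ ζ : ℝ) (hℓpos : 0 < ℓ)
    (hℓsq : ℓ ^ 2 = 1 - μ * α * (1 - α * L * (1 + ν) ^ 2) + 2 * ν * α * L)
    (hℓχ : ℓ < χ) (hζ : ζ = α * (1 + α * L) / ℓ)
    (x e : ℕ → EuclideanSpace ℝ (Fin n))
    (hrec : ∀ k, 1 ≤ k → x (k + 1) = x k - α • (gradient (f k) (x k) + e k))
    (herr : ∀ k, 1 ≤ k → ‖e k‖ ≤ ε k + ν * ‖gradient (f k) (x k)‖)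
    (xstar : ℕ → EuclideanSpace ℝ (Fin n)) (hxstar : ∀ k, xstar k ∈ Xstar k)
    (σv : ℝ) (hσv : ∀ k, 1 ≤ k → ‖xstar (k + 1) - xstar k‖ ≤ σv) :
    ∀ k, 1 ≤ k → ‖gradient (f k) (x k)‖ ≤
      L * Metric.infDist (x 1) (Xstar 1) + L * (σv + ζ * εbar) / (χ - ℓ) := by
  have hXA : ∀ k, Xstar k = {z | A z = A (xstar k)} := fun k => by
    have hAx : A (xstar k) = ustar k := by simpa [hXstar k] using hxstar k
    rw [hXstar k, hAx]
  have hclosed : ∀ k, IsClosed (Xstar k) := fun k =>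
    hXA k ▸ isClosed_eq A.continuous continuous_const
  have hmin : ∀ k, ∀ p ∈ Xstar k, ∀ y, f k p ≤ f k y := fun k p hp => by rwa [hXmin k] at hp
  have hχA : χ = minSingularValue A / ‖A‖ := by rw [hχ, hσmin, hσmax]; rfl
  have hℓ1 : ℓ < 1 :=
    hℓχ.trans_le (hχA ▸ div_le_one_of_le₀ (minSingularValue_le_opNorm A hA) (norm_nonneg A))
  have hαζ : α ≤ ζ := by
    rw [hζ, le_div_iff₀ hℓpos]
    nlinarith [mul_pos hα (mul_pos hα hL)]
  have hc : 0 ≤ σv + ζ * εbar :=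
    add_nonneg ((norm_nonneg _).trans (hσv 1 le_rfl))
      (mul_nonneg (hα.le.trans hαζ) ((hεnn 0).trans (hεbar 0)))
  have hrecur : ∀ k, 1 ≤ k → χ * infDist (x (k + 1)) (Xstar (k + 1)) ≤
      ℓ * infDist (x k) (Xstar k) + (σv + ζ * εbar) := by
    intro k hk
    have hcontr := infDist_sub_smul_gradient_add_le (hconv k) (hdiff k) hL (hLip k) (hclosed k)
      ⟨_, hxstar k⟩ (hmin k) (fun p hp => hfstar k p hp ▸ hQG k (x k)) hν hα.le hstep.le
      hℓpos.le hℓsq (herr k hk)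
    have htrans :=
      minSingularValue_div_opNorm_mul_infDist_le A hA (x (k + 1)) (xstar k) (xstar (k + 1))
    rw [← hXA, ← hXA, ← hχA] at htrans
    rw [← hrec k hk] at hcontr
    nlinarith [hσv k hk, mul_le_mul hαζ (hεbar k) (hεnn k) (hα.le.trans hαζ)]
  have hbound := le_add_div_sub_of_mul_le (d := fun k => infDist (x k) (Xstar k))
    hℓpos.le hℓχ hc infDist_nonneg hrecur
  intro k hk
  calc ‖gradient (f k) (x k)‖ ≤ L * infDist (x k) (Xstar k) :=
        norm_gradient_le_mul_infDist hL (hLip k) ⟨_, hxstar k⟩ (hmin k) (x k)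
    _ ≤ L * (infDist (x 1) (Xstar 1) + (σv + ζ * εbar) / (χ - ℓ)) := by gcongr; exact hbound k hk
    _ = _ := by ring

/-- Uniform gradient norm bound (Lemma 1 eq. (14), deterministic errors):
for every `k ≥ 1`, `‖∇f_k(x_k)‖ ≤ L·dist(x_1, X_1*) + L(σ_v + ζε)/(χ − ℓ)`. -/
theorem uniform_gradient_norm_bound_inexact_ogd {n m : ℕ}
    (A : EuclideanSpace ℝ (Fin n) →L[ℝ] EuclideanSpace ℝ (Fin m)) (hA : A ≠ 0)
    (σmin σmax χ : ℝ)
    (hσmin : σmin = sInf {c : ℝ | ∃ x : EuclideanSpace ℝ (Fin n),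
      x ≠ 0 ∧ x ∈ (LinearMap.ker (A : EuclideanSpace ℝ (Fin n) →ₗ[ℝ] EuclideanSpace ℝ (Fin m)))ᗮ ∧ c = ‖A x‖ / ‖x‖})
    (hσmax : σmax = ‖A‖) (hχ : χ = σmin / σmax)
    (f : ℕ → EuclideanSpace ℝ (Fin n) → ℝ)
    (hconv : ∀ k, ConvexOn ℝ Set.univ (f k)) (hdiff : ∀ k, Differentiable ℝ (f k))
    (L : ℝ) (hL : 0 < L)
    (hLip : ∀ k, ∀ u v : EuclideanSpace ℝ (Fin n),
      ‖gradient (f k) u - gradient (f k) v‖ ≤ L * ‖u - v‖)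
    (ustar : ℕ → EuclideanSpace ℝ (Fin m)) (hrange : ∀ k, ustar k ∈ Set.range A)
    (Xstar : ℕ → Set (EuclideanSpace ℝ (Fin n)))
    (hXstar : ∀ k, Xstar k = {x | A x = ustar k})
    (hXmin : ∀ k, Xstar k = {x | ∀ y : EuclideanSpace ℝ (Fin n), f k x ≤ f k y})
    (hgrad0 : ∀ k, ∀ y ∈ Xstar k, gradient (f k) y = 0)
    (fstar : ℕ → ℝ) (hfstar : ∀ k, ∀ x ∈ Xstar k, f k x = fstar k)
    (μ : ℝ) (hμ : 0 < μ)
    (hQG : ∀ k, ∀ x : EuclideanSpace ℝ (Fin n),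
      μ / 2 * Metric.infDist x (Xstar k) ^ 2 ≤ f k x - fstar k)
    (ε : ℕ → ℝ) (hεnn : ∀ k, 0 ≤ ε k) (εbar : ℝ) (hεbar : ∀ k, ε k ≤ εbar)
    (ν α : ℝ) (hν : 0 ≤ ν) (hα : 0 < α)
    (hstep : α * L * (1 + ν) ^ 2 < 1)
    (ℓ ζ : ℝ) (hℓpos : 0 < ℓ)
    (hℓsq : ℓ ^ 2 = 1 - μ * α * (1 - α * L * (1 + ν) ^ 2) + 2 * ν * α * L)
    (hℓχ : ℓ < χ) (hζ : ζ = α * (1 + α * L) / ℓ)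
    (x e : ℕ → EuclideanSpace ℝ (Fin n))
    (hrec : ∀ k, 1 ≤ k → x (k + 1) = x k - α • (gradient (f k) (x k) + e k))
    (herr : ∀ k, 1 ≤ k → ‖e k‖ ≤ ε k + ν * ‖gradient (f k) (x k)‖)
    (xstar : ℕ → EuclideanSpace ℝ (Fin n)) (hxstar : ∀ k, xstar k ∈ Xstar k)
    (σv : ℝ) (hσv : ∀ k, 1 ≤ k → ‖xstar (k + 1) - xstar k‖ ≤ σv) :
    ∀ k, 1 ≤ k → ‖gradient (f k) (x k)‖ ≤
      L * Metric.infDist (x 1) (Xstar 1) + L * (σv + ζ * εbar) / (χ - ℓ) :=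
  uniform_gradient_norm_bound_inexact_ogd_general A hA σmin σmax χ hσmin hσmax hχ f hconv hdiff L hL
    hLip ustar Xstar hXstar hXmin fstar hfstar μ hQG ε hεnn εbar hεbar ν α hν hα hstep ℓ ζ hℓpos
    hℓsq hℓχ hζ x e hrec herr xstar hxstar σv hσv
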